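/- Let G be a finite simple connected graph with edge set E, let e ∈ E, and let a^T x ≤ b be facet-defining for BOND(G) with a_e ≠ 0. Assume that the half-space {x ∈ ℝ^E : a^T x ≤ b} is not equal to the half-space {x ∈ ℝ^E : x_e ≥ 0}. Then there exists a bond δ of G with e ∈ δ and a^T x^δ = b. -/
import Mathlib


open Finset

namespace BondPolytope

variable {V : Type*}

/-- The cut `δ(S)`: edges of `G` with exactly one endpoint in `S`. -/
def cut (G : SimpleGraph V) (S : Set V) : Set (Sym2 V) :=
  {e | e ∈ G.edgeSet ∧ ∃ u w, e = s(u, w) ∧ u ∈ S ∧ w ∉ S}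

/-- A set of edges is a cut of `G`. -/
def IsCut (G : SimpleGraph V) (D : Set (Sym2 V)) : Prop :=
  ∃ S : Set V, D = cut G S

/-- A set of edges is a bond of `G`: it is a cut `δ(S)` such that both sides induce
connected (possibly empty) subgraphs. -/
def IsBond (G : SimpleGraph V) (D : Set (Sym2 V)) : Prop :=
  ∃ S : Set V, D = cut G S ∧ (G.induce S).Preconnected ∧ (G.induce Sᶜ).Preconnected

open Classical in
/-- The indicator vector `x^δ ∈ ℝ^E` of a set `δ` of edges. -/
noncomputable def indVec (G : SimpleGraph V) (D : Set (Sym2 V)) : ↥G.edgeSet → ℝ :=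
  fun e => if (e : Sym2 V) ∈ D then 1 else 0

/-- The bond polytope `BOND(G) ⊆ ℝ^E`. -/
noncomputable def bondPolytope (G : SimpleGraph V) : Set (↥G.edgeSet → ℝ) :=
  convexHull ℝ {x | ∃ D, IsBond G D ∧ x = indVec G D}

/-- The cut polytope `CUT(G) ⊆ ℝ^E`. -/
noncomputable def cutPolytope (G : SimpleGraph V) : Set (↥G.edgeSet → ℝ) :=
  convexHull ℝ {x | ∃ D, IsCut G D ∧ x = indVec G D}

/-- `a^T x`. -/
noncomputable def dot {ι : Type*} [Fintype ι] (a x : ι → ℝ) : ℝ := ∑ i, a i * x i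

/-- Affine dimension of a set of points. -/
noncomputable def affDim {W : Type*} [AddCommGroup W] [Module ℝ W] (s : Set W) : ℕ :=
  Module.finrank ℝ ↥(vectorSpan ℝ s)

/-- `a^T x ≤ b` is facet-defining for `P`. -/
def IsFacet {ι : Type*} [Fintype ι] (P : Set (ι → ℝ)) (a : ι → ℝ) (b : ℝ) : Prop :=
  a ≠ 0 ∧ (∀ x ∈ P, dot a x ≤ b) ∧ {x ∈ P | dot a x = b}.Nonempty ∧
    affDim {x ∈ P | dot a x = b} + 1 = affDim P


section Aux

variable {V : Type*}

lemma mem_cut_iff (G : SimpleGraph V) (S : Set V) (x y : V) :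
    s(x, y) ∈ cut G S ↔ G.Adj x y ∧ ((x ∈ S ∧ y ∉ S) ∨ (y ∈ S ∧ x ∉ S)) := by
  constructor
  · rintro ⟨he, p, q, hpq, hp, hq⟩
    rcases Sym2.eq_iff.1 hpq with ⟨rfl, rfl⟩ | ⟨rfl, rfl⟩
    · exact ⟨G.mem_edgeSet.1 he, Or.inl ⟨hp, hq⟩⟩
    · exact ⟨G.mem_edgeSet.1 he, Or.inr ⟨hp, hq⟩⟩
  · rintro ⟨hadj, ⟨hx, hy⟩ | ⟨hy, hx⟩⟩
    · exact ⟨G.mem_edgeSet.2 hadj, x, y, rfl, hx, hy⟩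
    · exact ⟨G.mem_edgeSet.2 hadj, y, x, Sym2.eq_swap.symm, hy, hx⟩

lemma cut_compl (G : SimpleGraph V) (S : Set V) : cut G Sᶜ = cut G S := by
  ext x
  obtain ⟨x, y, rfl⟩ : ∃ u v, x = s(u, v) := by
    obtain ⟨⟨u, v⟩, h⟩ := Quot.exists_rep x; exact ⟨u, v, h.symm⟩
  simp only [mem_cut_iff, Set.mem_compl_iff, not_not]
  tauto

lemma cut_nonempty {G : SimpleGraph V} (hG : G.Connected) {A : Set V}
    (hA : A.Nonempty) (hA' : Aᶜ.Nonempty) : (cut G A).Nonempty := by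
  obtain ⟨u, hu⟩ := hA
  obtain ⟨v, hv⟩ := hA'
  obtain ⟨p⟩ := hG.preconnected u v
  obtain ⟨d, _, h1, h2⟩ := p.exists_boundary_dart A hu hv
  exact ⟨s(d.toProd.1, d.toProd.2), (mem_cut_iff G A _ _).2 ⟨d.adj, Or.inl ⟨h1, h2⟩⟩⟩

/-- Splitting a set inducing a disconnected subgraph. -/
lemma split_of_not_preconnected {G : SimpleGraph V} {T : Set V}
    (hT : ¬ (G.induce T).Preconnected) :
    ∃ A B : Set V, A.Nonempty ∧ B.Nonempty ∧ A ∪ B = T ∧ Disjoint A B ∧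
      (∀ p q, p ∈ A → q ∈ B → ¬ G.Adj p q) := by
  rw [SimpleGraph.Preconnected] at hT
  push_neg at hT
  obtain ⟨a, b, hab⟩ := hT
  set A : Set V := {w | ∃ h : w ∈ T, (G.induce T).Reachable a ⟨w, h⟩} with hAdef
  have hAsub : A ⊆ T := fun w hw => hw.1
  refine ⟨A, T \ A, ⟨↑a, a.2, SimpleGraph.Reachable.refl _⟩, ⟨↑b, b.2, ?_⟩,
    Set.union_diff_cancel hAsub, Set.disjoint_sdiff_right, ?_⟩
  · intro hbA
    obtain ⟨h, hr⟩ := hbA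
    exact hab hr
  · rintro p q hp ⟨hqT, hqA⟩ hadj
    obtain ⟨hpT, hpr⟩ := hp
    exact hqA ⟨hqT, hpr.trans (SimpleGraph.Adj.reachable (by exact hadj))⟩

lemma cut_split {G : SimpleGraph V} {A B T : Set V} (hun : A ∪ B = T) (hd : Disjoint A B)
    (hno : ∀ p q, p ∈ A → q ∈ B → ¬ G.Adj p q) :
    cut G T = cut G A ∪ cut G B ∧ Disjoint (cut G A) (cut G B) := by
  have hAT : A ⊆ T := hun ▸ Set.subset_union_left
  have hBT : B ⊆ T := hun ▸ Set.subset_union_right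
  constructor
  · ext x
    obtain ⟨x, y, rfl⟩ : ∃ u v, x = s(u, v) := by
      obtain ⟨⟨u, v⟩, h⟩ := Quot.exists_rep x; exact ⟨u, v, h.symm⟩
    simp only [Set.mem_union, mem_cut_iff]
    constructor
    · rintro ⟨hadj, ⟨hx, hy⟩ | ⟨hy, hx⟩⟩
      · rcases (hun ▸ hx : x ∈ A ∪ B) with h | h
        · exact Or.inl ⟨hadj, Or.inl ⟨h, fun hyA => hy (hAT hyA)⟩⟩
        · exact Or.inr ⟨hadj, Or.inl ⟨h, fun hyB => hy (hBT hyB)⟩⟩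
      · rcases (hun ▸ hy : y ∈ A ∪ B) with h | h
        · exact Or.inl ⟨hadj, Or.inr ⟨h, fun hxA => hx (hAT hxA)⟩⟩
        · exact Or.inr ⟨hadj, Or.inr ⟨h, fun hxB => hx (hBT hxB)⟩⟩
    · have key : ∀ p q : V, G.Adj p q → p ∈ A → q ∉ A → (p ∈ T ∧ q ∉ T) ∨ (q ∈ T ∧ p ∉ T) := by
        intro p q hadj hp hq
        refine Or.inl ⟨hAT hp, fun hqT => ?_⟩
        rcases (hun ▸ hqT : q ∈ A ∪ B) with h | h
        · exact hq h
        · exact hno p q hp h hadj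
      have key' : ∀ p q : V, G.Adj p q → p ∈ B → q ∉ B → (p ∈ T ∧ q ∉ T) ∨ (q ∈ T ∧ p ∉ T) := by
        intro p q hadj hp hq
        refine Or.inl ⟨hBT hp, fun hqT => ?_⟩
        rcases (hun ▸ hqT : q ∈ A ∪ B) with h | h
        · exact hno q p h hp hadj.symm
        · exact hq h
      rintro (⟨hadj, ⟨hx, hy⟩ | ⟨hy, hx⟩⟩ | ⟨hadj, ⟨hx, hy⟩ | ⟨hy, hx⟩⟩)
      · exact ⟨hadj, key x y hadj hx hy⟩
      · exact ⟨hadj, (key y x hadj.symm hy hx).symm⟩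
      · exact ⟨hadj, key' x y hadj hx hy⟩
      · exact ⟨hadj, (key' y x hadj.symm hy hx).symm⟩
  · rw [Set.disjoint_left]
    intro x hxA hxB
    obtain ⟨p, q, rfl⟩ : ∃ u v, x = s(u, v) := by
      obtain ⟨⟨u, v⟩, h⟩ := Quot.exists_rep x; exact ⟨u, v, h.symm⟩
    obtain ⟨hadj, hA'⟩ := (mem_cut_iff G A p q).1 hxA
    obtain ⟨-, hB'⟩ := (mem_cut_iff G B p q).1 hxB
    rcases hA' with ⟨h1, h2⟩ | ⟨h1, h2⟩ <;> rcases hB' with ⟨h3, h4⟩ | ⟨h3, h4⟩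
    · exact Set.disjoint_left.mp hd h1 h3
    · exact hno p q h1 h3 hadj
    · exact hno q p h1 h3 hadj.symm
    · exact Set.disjoint_left.mp hd h1 h3

end Aux
section Aux2

variable {V : Type*} [Fintype V] [DecidableEq V]

/-- The generating set of the bond polytope. -/
def genSet (G : SimpleGraph V) : Set (↥G.edgeSet → ℝ) :=
  {x | ∃ D, IsBond G D ∧ x = indVec G D}

lemma indVec_union_disjoint (G : SimpleGraph V) {D₁ D₂ : Set (Sym2 V)} (h : Disjoint D₁ D₂) :
    indVec G (D₁ ∪ D₂) = indVec G D₁ + indVec G D₂ := by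
  funext f
  classical
  simp only [indVec, Pi.add_apply]
  by_cases h1 : (f : Sym2 V) ∈ D₁ <;> by_cases h2 : (f : Sym2 V) ∈ D₂
  · exact absurd h2 (Set.disjoint_left.mp h h1)
  · simp [Set.mem_union, h1, h2]
  · simp [Set.mem_union, h1, h2]
  · simp [Set.mem_union, h1, h2]

lemma cut_decomp (G : SimpleGraph V) (hG : G.Connected) :
    ∀ n (S : Set V), (cut G S).ncard = n →
    indVec G (cut G S) ∈ Submodule.span ℝ (genSet G) ∧
      (∀ x ∈ cut G S, ∃ B, IsBond G B ∧ x ∈ B) := by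
  intro n
  induction n using Nat.strong_induction_on with
  | _ n IH =>
    intro S hS
    have key : ∀ T : Set V, cut G S = cut G T → ¬ (G.induce T).Preconnected →
        indVec G (cut G S) ∈ Submodule.span ℝ (genSet G) ∧
          (∀ x ∈ cut G S, ∃ B, IsBond G B ∧ x ∈ B) := by
      intro T hST hT
      obtain ⟨A, B, hA, hB, hun, hd, hno⟩ := split_of_not_preconnected hT
      obtain ⟨hcutT, hdisj⟩ := cut_split hun hd hno
      have hAc : Aᶜ.Nonempty := by
        obtain ⟨q, hq⟩ := hB
        exact ⟨q, Set.disjoint_right.mp hd hq⟩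
      have hBc : Bᶜ.Nonempty := by
        obtain ⟨p, hp⟩ := hA
        exact ⟨p, Set.disjoint_left.mp hd hp⟩
      have hAne := cut_nonempty hG hA hAc
      have hBne := cut_nonempty hG hB hBc
      have hcutS : cut G S = cut G A ∪ cut G B := hST.trans hcutT
      have hAlt : (cut G A).ncard < n := by
        rw [← hS]
        apply Set.ncard_lt_ncard _ (Set.toFinite _)
        rw [hcutS]
        refine (Set.ssubset_iff_of_subset Set.subset_union_left).2 ?_
        obtain ⟨y, hy⟩ := hBne
        exact ⟨y, Or.inr hy, Set.disjoint_right.mp hdisj hy⟩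
      have hBlt : (cut G B).ncard < n := by
        rw [← hS]
        apply Set.ncard_lt_ncard _ (Set.toFinite _)
        rw [hcutS]
        refine (Set.ssubset_iff_of_subset Set.subset_union_right).2 ?_
        obtain ⟨y, hy⟩ := hAne
        exact ⟨y, Or.inl hy, Set.disjoint_left.mp hdisj hy⟩
      obtain ⟨hA1, hA2⟩ := IH _ hAlt A rfl
      obtain ⟨hB1, hB2⟩ := IH _ hBlt B rfl
      constructor
      · rw [hcutS, indVec_union_disjoint G hdisj]
        exact Submodule.add_mem _ hA1 hB1
      · intro x hx
        rcases (hcutS ▸ hx : x ∈ cut G A ∪ cut G B) with h | h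
        · exact hA2 x h
        · exact hB2 x h
    by_cases h1 : (G.induce S).Preconnected
    · by_cases h2 : (G.induce Sᶜ).Preconnected
      · have hbond : IsBond G (cut G S) := ⟨S, rfl, h1, h2⟩
        exact ⟨Submodule.subset_span ⟨_, hbond, rfl⟩, fun x hx => ⟨_, hbond, hx⟩⟩
      · exact key Sᶜ (cut_compl G S).symm h2
    · exact key S rfl h1

lemma indVec_cut_mem_span (G : SimpleGraph V) (hG : G.Connected) (S : Set V) :
    indVec G (cut G S) ∈ Submodule.span ℝ (genSet G) :=
  (cut_decomp G hG _ S rfl).1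

lemma exists_bond_mem (G : SimpleGraph V) (hG : G.Connected) {S : Set V} {x : Sym2 V}
    (hx : x ∈ cut G S) : ∃ B, IsBond G B ∧ x ∈ B :=
  (cut_decomp G hG _ S rfl).2 x hx

lemma zero_mem_genSet (G : SimpleGraph V) (hG : G.Connected) :
    (0 : ↥G.edgeSet → ℝ) ∈ genSet G := by
  refine ⟨∅, ⟨∅, ?_, ?_, ?_⟩, ?_⟩
  · ext x
    obtain ⟨p, q, rfl⟩ : ∃ u v, x = s(u, v) := by
      obtain ⟨⟨u, v⟩, h⟩ := Quot.exists_rep x; exact ⟨u, v, h.symm⟩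
    simp [mem_cut_iff]
  · rintro ⟨v, hv⟩
    exact absurd hv (Set.notMem_empty v)
  · rw [Set.compl_empty]
    exact (SimpleGraph.induceUnivIso G).preconnected_iff.2 hG.preconnected
  · funext f
    simp [indVec]

end Aux2
section Aux3

variable {V : Type*} [Fintype V] [DecidableEq V]

lemma chi_eq (G : SimpleGraph V) {u v : V} (huv : G.Adj u v) :
    indVec G {s(u, v)} =
      (1 / 2 : ℝ) • (indVec G (cut G {u}) + indVec G (cut G {v}) - indVec G (cut G ({u, v} : Set V))) := by
  classical
  funext f
  obtain ⟨x, y, hxy_eq⟩ : ∃ p q, (f : Sym2 V) = s(p, q) := by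
    obtain ⟨⟨p, q⟩, h⟩ := Quot.exists_rep (f : Sym2 V); exact ⟨p, q, h.symm⟩
  have hxy : G.Adj x y := G.mem_edgeSet.1 (hxy_eq ▸ f.2)
  have hne : u ≠ v := huv.ne
  have hxyne : x ≠ y := hxy.ne
  simp only [indVec, Pi.smul_apply, Pi.add_apply, Pi.sub_apply, smul_eq_mul, hxy_eq]
  have h1 : (s(x, y) ∈ cut G ({u} : Set V)) ↔ (x = u ∨ y = u) := by
    rw [mem_cut_iff]
    simp only [Set.mem_singleton_iff]
    constructor
    · rintro ⟨-, ⟨h, -⟩ | ⟨h, -⟩⟩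
      · exact Or.inl h
      · exact Or.inr h
    · rintro (rfl | rfl)
      · exact ⟨hxy, Or.inl ⟨rfl, fun h => hxyne h.symm⟩⟩
      · exact ⟨hxy, Or.inr ⟨rfl, fun h => hxyne h⟩⟩
  have h2 : (s(x, y) ∈ cut G ({v} : Set V)) ↔ (x = v ∨ y = v) := by
    rw [mem_cut_iff]
    simp only [Set.mem_singleton_iff]
    constructor
    · rintro ⟨-, ⟨h, -⟩ | ⟨h, -⟩⟩
      · exact Or.inl h
      · exact Or.inr h
    · rintro (rfl | rfl)
      · exact ⟨hxy, Or.inl ⟨rfl, fun h => hxyne h.symm⟩⟩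
      · exact ⟨hxy, Or.inr ⟨rfl, fun h => hxyne h⟩⟩
  have h3 : (s(x, y) ∈ cut G ({u, v} : Set V)) ↔
      (((x = u ∨ x = v) ∧ ¬(y = u ∨ y = v)) ∨ ((y = u ∨ y = v) ∧ ¬(x = u ∨ x = v))) := by
    rw [mem_cut_iff]
    simp only [Set.mem_insert_iff, Set.mem_singleton_iff]
    constructor
    · rintro ⟨-, h⟩
      exact h
    · rintro h
      exact ⟨hxy, h⟩
  have h4 : (s(x, y) ∈ ({s(u, v)} : Set (Sym2 V))) ↔ ((x = u ∧ y = v) ∨ (x = v ∧ y = u)) := by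
    rw [Set.mem_singleton_iff, Sym2.eq_iff]
  rw [if_congr h4 rfl rfl, if_congr h1 rfl rfl, if_congr h2 rfl rfl, if_congr h3 rfl rfl]
  by_cases hxu : x = u <;> by_cases hxv : x = v <;> by_cases hyu : y = u <;> by_cases hyv : y = v <;>
    simp_all <;> norm_num

lemma span_genSet (G : SimpleGraph V) [DecidableRel G.Adj] (hG : G.Connected) :
    Submodule.span ℝ (genSet G) = ⊤ := by
  rw [eq_top_iff]
  intro x _
  rw [pi_eq_sum_univ x]
  apply Submodule.sum_mem
  intro f _
  apply Submodule.smul_mem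
  have hsingle : (fun j => if f = j then (1 : ℝ) else 0) = indVec G {(f : Sym2 V)} := by
    funext j
    simp only [indVec, Set.mem_singleton_iff]
    refine if_congr ?_ rfl rfl
    rw [← Subtype.ext_iff]
    exact eq_comm
  rw [hsingle]
  obtain ⟨u, v, huv_eq⟩ : ∃ p q, (f : Sym2 V) = s(p, q) := by
    obtain ⟨⟨p, q⟩, h⟩ := Quot.exists_rep (f : Sym2 V); exact ⟨p, q, h.symm⟩
  have huv : G.Adj u v := G.mem_edgeSet.1 (huv_eq ▸ f.2)
  rw [huv_eq, chi_eq G huv]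
  exact Submodule.smul_mem _ _ (Submodule.sub_mem _
    (Submodule.add_mem _ (indVec_cut_mem_span G hG _) (indVec_cut_mem_span G hG _))
    (indVec_cut_mem_span G hG _))

lemma vectorSpan_genSet (G : SimpleGraph V) [DecidableRel G.Adj] (hG : G.Connected) :
    vectorSpan ℝ (genSet G) = ⊤ := by
  refine le_antisymm le_top ?_
  rw [← span_genSet G hG, Submodule.span_le]
  intro w hw
  have h0 := zero_mem_genSet G hG
  have := vsub_mem_vectorSpan ℝ hw h0
  simpa using this

lemma affDim_bondPolytope (G : SimpleGraph V) [DecidableRel G.Adj] (hG : G.Connected) :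
    affDim (bondPolytope G) = Fintype.card ↥G.edgeSet := by
  have hvs : vectorSpan ℝ (bondPolytope G) = ⊤ := by
    rw [bondPolytope, ← direction_affineSpan, affineSpan_convexHull, direction_affineSpan]
    exact vectorSpan_genSet G hG
  rw [affDim, hvs, finrank_top, Module.finrank_pi]

end Aux3
section Aux4

/-- `dot a` as a linear map. -/
noncomputable def dotLM {ι : Type*} [Fintype ι] (a : ι → ℝ) : (ι → ℝ) →ₗ[ℝ] ℝ where
  toFun := dot a
  map_add' x y := by
    simp only [dot, Pi.add_apply, mul_add]
    rw [Finset.sum_add_distrib]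
  map_smul' c x := by
    simp only [dot, Pi.smul_apply, smul_eq_mul, RingHom.id_apply]
    rw [Finset.mul_sum]
    exact Finset.sum_congr rfl fun i _ => by ring

@[simp] lemma dotLM_apply {ι : Type*} [Fintype ι] (a x : ι → ℝ) : dotLM a x = dot a x := rfl

lemma dot_sum_smul {ι κ : Type*} [Fintype ι] (a : ι → ℝ) (t : Finset κ) (w : κ → ℝ)
    (z : κ → ι → ℝ) : dot a (∑ i ∈ t, w i • z i) = ∑ i ∈ t, w i * dot a (z i) := by
  rw [← dotLM_apply, map_sum]
  exact Finset.sum_congr rfl fun i _ => by rw [map_smul, smul_eq_mul, dotLM_apply]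

end Aux4
theorem exists_tight_bond_containing_edge {V : Type*} [Fintype V] [DecidableEq V]
    (G : SimpleGraph V) [DecidableRel G.Adj] (hG : G.Connected)
    (a : ↥G.edgeSet → ℝ) (b : ℝ) (e : ↥G.edgeSet)
    (hfacet : IsFacet (bondPolytope G) a b) (hae : a e ≠ 0)
    (hne : {x : ↥G.edgeSet → ℝ | dot a x ≤ b} ≠ {x : ↥G.edgeSet → ℝ | 0 ≤ x e}) :
    ∃ D : Set (Sym2 V), IsBond G D ∧ (e : Sym2 V) ∈ D ∧ dot a (indVec G D) = b := by
  classical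
  by_contra hcon
  push_neg at hcon
  obtain ⟨hane, hvalid, ⟨x₀, hx₀P, hx₀b⟩, hdim⟩ := hfacet
  have key1 : ∀ x ∈ bondPolytope G, dot a x = b → x e = 0 := by
    intro x hxP hxb
    rw [bondPolytope, _root_.convexHull_eq] at hxP
    obtain ⟨ι, t, w, z, hw0, hw1, hz, hcm⟩ := hxP
    have hxsum : x = ∑ i ∈ t, w i • z i := by
      rw [← hcm, Finset.centerMass_eq_of_sum_1 t z hw1]
    have hub : ∀ i ∈ t, dot a (z i) ≤ b := fun i hi =>
      hvalid _ (subset_convexHull ℝ _ (hz i hi))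
    have htight : ∀ i ∈ t, w i ≠ 0 → dot a (z i) = b := by
      intro i hi hwi
      by_contra hlt
      have hwpos : 0 < w i := lt_of_le_of_ne (hw0 i hi) (Ne.symm hwi)
      have hstrict : ∑ j ∈ t, w j * dot a (z j) < ∑ j ∈ t, w j * b := by
        refine Finset.sum_lt_sum
          (fun j hj => mul_le_mul_of_nonneg_left (hub j hj) (hw0 j hj)) ⟨i, hi, ?_⟩
        exact mul_lt_mul_of_pos_left (lt_of_le_of_ne (hub i hi) hlt) hwpos
      rw [← Finset.sum_mul, hw1, one_mul, ← dot_sum_smul a t w z, ← hxsum, hxb] at hstrict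
      exact lt_irrefl b hstrict
    have hxe : x e = ∑ i ∈ t, w i * z i e := by
      rw [hxsum]
      simp [Finset.sum_apply]
    rw [hxe]
    apply Finset.sum_eq_zero
    intro i hi
    by_cases hwi : w i = 0
    · rw [hwi, zero_mul]
    · obtain ⟨D, hD, hzD⟩ := hz i hi
      have htb : dot a (indVec G D) = b := by rw [← hzD]; exact htight i hi hwi
      have heD : (e : Sym2 V) ∉ D := fun h => hcon D hD h htb
      rw [hzD]
      simp [indVec, heD]
  set F : Set (↥G.edgeSet → ℝ) := {x ∈ bondPolytope G | dot a x = b} with hF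
  have hFe : ∀ x ∈ F, x e = 0 := fun x hx => key1 x hx.1 hx.2
  set pr : (↥G.edgeSet → ℝ) →ₗ[ℝ] ℝ := LinearMap.proj e with hpr
  have hUle : vectorSpan ℝ F ≤ LinearMap.ker pr := by
    rw [vectorSpan_def, Submodule.span_le]
    intro d hd
    rw [Set.mem_vsub] at hd
    obtain ⟨y, hy, z, hz', rfl⟩ := hd
    rw [SetLike.mem_coe, LinearMap.mem_ker]
    show (y - z) e = 0
    rw [Pi.sub_apply, hFe y hy, hFe z hz', sub_zero]
  have hUlea : vectorSpan ℝ F ≤ LinearMap.ker (dotLM a) := by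
    rw [vectorSpan_def, Submodule.span_le]
    intro d hd
    rw [Set.mem_vsub] at hd
    obtain ⟨y, hy, z, hz', rfl⟩ := hd
    rw [SetLike.mem_coe, LinearMap.mem_ker]
    show dotLM a (y - z) = 0
    rw [map_sub, dotLM_apply, dotLM_apply, hy.2, hz'.2, sub_self]
  have haff : affDim (bondPolytope G) = Fintype.card ↥G.edgeSet := affDim_bondPolytope G hG
  have hUrank : Module.finrank ℝ ↥(vectorSpan ℝ F) + 1 = Fintype.card ↥G.edgeSet :=
    hdim.trans haff
  have hproj_rank : 1 + Module.finrank ℝ ↥(LinearMap.ker pr) = Fintype.card ↥G.edgeSet := by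
    have h := LinearMap.finrank_range_add_finrank_ker pr
    have hr : LinearMap.range pr = ⊤ := by
      rw [LinearMap.range_eq_top]
      intro c
      exact ⟨Pi.single e c, by simp [hpr]⟩
    rw [hr, finrank_top, Module.finrank_self, Module.finrank_pi] at h
    exact h
  have hUK : vectorSpan ℝ F = LinearMap.ker pr :=
    Submodule.eq_of_le_of_finrank_le hUle (by omega)
  have hker_a : ∀ d : ↥G.edgeSet → ℝ, d e = 0 → dot a d = 0 := by
    intro d hd
    have hdK : d ∈ LinearMap.ker pr := by
      rw [LinearMap.mem_ker]
      show d e = 0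
      exact hd
    rw [← hUK] at hdK
    have := hUlea hdK
    rw [LinearMap.mem_ker, dotLM_apply] at this
    exact this
  have haf : ∀ f : ↥G.edgeSet, f ≠ e → a f = 0 := by
    intro f hf
    have h1 : (Pi.single f (1 : ℝ) : ↥G.edgeSet → ℝ) e = 0 := by simp [Pi.single_apply, Ne.symm hf]
    have h2 := hker_a (Pi.single f (1:ℝ)) h1
    have h3 : dot a (Pi.single f 1) = a f := by
      simp [dot, Pi.single_apply, mul_ite, Finset.sum_ite_eq']
    rw [h3] at h2
    exact h2
  have hb0 : b = 0 := by
    have hx₀e : x₀ e = 0 := key1 x₀ hx₀P hx₀b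
    have hz : dot a x₀ = 0 := by
      rw [dot]
      apply Finset.sum_eq_zero
      intro j _
      by_cases hj : j = e
      · rw [hj, hx₀e, mul_zero]
      · rw [haf j hj, zero_mul]
    rw [← hx₀b, hz]
  obtain ⟨u, v, huv_eq⟩ : ∃ p q, (e : Sym2 V) = s(p, q) := by
    obtain ⟨⟨p, q⟩, h⟩ := Quot.exists_rep (e : Sym2 V); exact ⟨p, q, h.symm⟩
  have huv : G.Adj u v := G.mem_edgeSet.1 (huv_eq ▸ e.2)
  have hecut : (e : Sym2 V) ∈ cut G ({u} : Set V) := by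
    rw [huv_eq, mem_cut_iff]
    exact ⟨huv, Or.inl ⟨rfl, fun h => huv.ne (Set.mem_singleton_iff.1 h).symm⟩⟩
  obtain ⟨B, hBbond, heB⟩ := exists_bond_mem G hG hecut
  have hvB : dot a (indVec G B) ≤ b :=
    hvalid _ (subset_convexHull ℝ _ ⟨B, hBbond, rfl⟩)
  have hdB : dot a (indVec G B) = a e := by
    rw [dot, Finset.sum_eq_single e]
    · simp [indVec, heB]
    · intro j _ hj
      rw [haf j hj, zero_mul]
    · intro h
      exact absurd (Finset.mem_univ e) h
  have haen : a e < 0 := lt_of_le_of_ne (hb0 ▸ hdB ▸ hvB) hae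
  apply hne
  ext x
  simp only [Set.mem_setOf_eq]
  have hdx : dot a x = a e * x e := by
    rw [dot, Finset.sum_eq_single e]
    · intro j _ hj
      rw [haf j hj, zero_mul]
    · intro h
      exact absurd (Finset.mem_univ e) h
  rw [hdx, hb0]
  constructor
  · intro h
    by_contra hneg
    push_neg at hneg
    nlinarith
  · intro h
    exact mul_nonpos_of_nonpos_of_nonneg haen.le h

end BondPolytope
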